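/- arXiv:2407.14905 — 9 statements merged into one kernel-verified Lean document; each statement's English description precedes it below -/
import Mathlib

section
/- Let r ≥ 5 be an integer, s = ⌈r/2⌉, and h ≥ r(r-1)/2. If ℓ and i are integers with either (2 ≤ ℓ ≤ s-2 and r-s+1 ≤ i ≤ r-1) or (ℓ = s-1 and r-s+2 ≤ i ≤ r-1), then (2/r)·(r - 2 - (ℓ-1)/(i-ℓ))·(h - r(r-2)/4 + 1) ≥ h - ((ℓ-1)·s + r - i). -/
lemma key_poly (r s h ℓ i : ℤ) (hr : 5 ≤ r) (h1 : r ≤ 2*s) (h2 : 2*s ≤ r+1)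
    (hh : r*(r-1) ≤ 2*h)
    (hcase : (2 ≤ ℓ ∧ ℓ ≤ s - 2 ∧ r - s + 1 ≤ i ∧ i ≤ r - 1) ∨
             (ℓ = s - 1 ∧ r - s + 2 ≤ i ∧ i ≤ r - 1)) :
    0 ≤ (2*(i-ℓ)*(r-2)-2*(ℓ-1))*(4*h-r*(r-2)+4) - 4*r*(i-ℓ)*(h-(ℓ-1)*s-r+i) := by
  have hpar : r = 2*s ∨ r = 2*s - 1 := by omega
  have hs3 : 3 ≤ s := by omega
  rcases hpar with rfl | rfl
  · rcases hcase with ⟨hl2, hls, hi1, hi2⟩ | ⟨rfl, hi1, hi2⟩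
    · have hi1' : s + 1 ≤ i := by omega
      have hi2' : i ≤ 2*s - 1 := by omega
      nlinarith [mul_nonneg (by linarith : (0:ℤ) ≤ 2*h - 2*s*(2*s-1)) (by nlinarith : (0:ℤ) ≤ (i-ℓ)*(2*s-4) - 2*(ℓ-1)),
        mul_nonneg (mul_nonneg (by linarith : (0:ℤ) ≤ i - s - 1) (by linarith : (0:ℤ) ≤ 2*s-1-i)) (by linarith : (0:ℤ) ≤ s),
        mul_nonneg (mul_nonneg (by linarith : (0:ℤ) ≤ s-2-ℓ) (by linarith : (0:ℤ) ≤ 2*s-1-i)) (by linarith : (0:ℤ) ≤ s),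
        mul_nonneg (mul_nonneg (by linarith : (0:ℤ) ≤ s-2-ℓ) (by linarith : (0:ℤ) ≤ i-s-1)) (by linarith : (0:ℤ) ≤ s),
        mul_nonneg (mul_nonneg (by linarith : (0:ℤ) ≤ ℓ-2) (by linarith : (0:ℤ) ≤ 2*s-1-i)) (by linarith : (0:ℤ) ≤ s),
        mul_nonneg (mul_nonneg (by linarith : (0:ℤ) ≤ ℓ-2) (by linarith : (0:ℤ) ≤ i-s-1)) (by linarith : (0:ℤ) ≤ s),
        mul_nonneg (by linarith : (0:ℤ) ≤ s-2-ℓ) (by linarith : (0:ℤ) ≤ 2*s-1-i),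
        mul_nonneg (by linarith : (0:ℤ) ≤ s-2-ℓ) (by linarith : (0:ℤ) ≤ i-s-1),
        sq_nonneg (s-3), mul_nonneg (by linarith : (0:ℤ) ≤ s-3) (by linarith : (0:ℤ) ≤ s)]
    · have hi1' : s + 2 ≤ i := by omega
      have hi2' : i ≤ 2*s - 1 := by omega
      nlinarith [mul_nonneg (by linarith : (0:ℤ) ≤ 2*h - 2*s*(2*s-1)) (by nlinarith : (0:ℤ) ≤ (i-(s-1))*(2*s-4) - 2*(s-2)),
        mul_nonneg (mul_nonneg (by linarith : (0:ℤ) ≤ i - s - 2) (by linarith : (0:ℤ) ≤ 2*s-1-i)) (by linarith : (0:ℤ) ≤ s),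
        mul_nonneg (by linarith : (0:ℤ) ≤ i - s - 2) (by linarith : (0:ℤ) ≤ 2*s-1-i),
        sq_nonneg (s-3), mul_nonneg (by linarith : (0:ℤ) ≤ s-3) (by linarith : (0:ℤ) ≤ s),
        mul_nonneg (mul_nonneg (by linarith : (0:ℤ) ≤ s-3) (by linarith : (0:ℤ) ≤ s)) (by linarith : (0:ℤ) ≤ s)]
  · rcases hcase with ⟨hl2, hls, hi1, hi2⟩ | ⟨rfl, hi1, hi2⟩
    · have hi1' : s ≤ i := by omega
      have hi2' : i ≤ 2*s - 2 := by omega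
      nlinarith [mul_nonneg (by linarith : (0:ℤ) ≤ 2*h - (2*s-1)*(2*s-2)) (by nlinarith : (0:ℤ) ≤ (i-ℓ)*(2*s-5) - 2*(ℓ-1)),
        mul_nonneg (mul_nonneg (by linarith : (0:ℤ) ≤ i - s) (by linarith : (0:ℤ) ≤ 2*s-2-i)) (by linarith : (0:ℤ) ≤ s),
        mul_nonneg (mul_nonneg (by linarith : (0:ℤ) ≤ s-2-ℓ) (by linarith : (0:ℤ) ≤ 2*s-2-i)) (by linarith : (0:ℤ) ≤ s),
        mul_nonneg (mul_nonneg (by linarith : (0:ℤ) ≤ s-2-ℓ) (by linarith : (0:ℤ) ≤ i-s)) (by linarith : (0:ℤ) ≤ s),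
        mul_nonneg (mul_nonneg (by linarith : (0:ℤ) ≤ ℓ-2) (by linarith : (0:ℤ) ≤ 2*s-2-i)) (by linarith : (0:ℤ) ≤ s),
        mul_nonneg (mul_nonneg (by linarith : (0:ℤ) ≤ ℓ-2) (by linarith : (0:ℤ) ≤ i-s)) (by linarith : (0:ℤ) ≤ s),
        mul_nonneg (by linarith : (0:ℤ) ≤ s-2-ℓ) (by linarith : (0:ℤ) ≤ 2*s-2-i),
        mul_nonneg (by linarith : (0:ℤ) ≤ s-2-ℓ) (by linarith : (0:ℤ) ≤ i-s),
        sq_nonneg (s-3), mul_nonneg (by linarith : (0:ℤ) ≤ s-3) (by linarith : (0:ℤ) ≤ s)]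
    · have hi1' : s + 1 ≤ i := by omega
      have hi2' : i ≤ 2*s - 2 := by omega
      nlinarith [mul_nonneg (by linarith : (0:ℤ) ≤ 2*h - (2*s-1)*(2*s-2)) (by nlinarith : (0:ℤ) ≤ (i-(s-1))*(2*s-5) - 2*(s-2)),
        mul_nonneg (mul_nonneg (by linarith : (0:ℤ) ≤ i - s - 1) (by linarith : (0:ℤ) ≤ 2*s-2-i)) (by linarith : (0:ℤ) ≤ s),
        mul_nonneg (by linarith : (0:ℤ) ≤ i - s - 1) (by linarith : (0:ℤ) ≤ 2*s-2-i),
        sq_nonneg (s-3), mul_nonneg (by linarith : (0:ℤ) ≤ s-3) (by linarith : (0:ℤ) ≤ s),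
        mul_nonneg (mul_nonneg (by linarith : (0:ℤ) ≤ s-3) (by linarith : (0:ℤ) ≤ s)) (by linarith : (0:ℤ) ≤ s)]

/-- Lemma 2.2 (le:calculation-1). -/
theorem stmt_0 (r s h ℓ i : ℤ) (hr : 5 ≤ r) (hs : s = ⌈(r : ℚ) / 2⌉)
    (hh : r * (r - 1) / 2 ≤ h)
    (hcase : (2 ≤ ℓ ∧ ℓ ≤ s - 2 ∧ r - s + 1 ≤ i ∧ i ≤ r - 1) ∨
             (ℓ = s - 1 ∧ r - s + 2 ≤ i ∧ i ≤ r - 1)) :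
    (2 / (r : ℚ)) * ((r : ℚ) - 2 - ((ℓ : ℚ) - 1) / ((i : ℚ) - ℓ)) *
        ((h : ℚ) - (r : ℚ) * ((r : ℚ) - 2) / 4 + 1)
      ≥ (h : ℚ) - (((ℓ : ℚ) - 1) * (s : ℚ) + (r : ℚ) - (i : ℚ)) := by
  -- bounds on s from the ceiling
  have h1 : r ≤ 2 * s := by
    have := Int.le_ceil ((r : ℚ) / 2)
    rw [← hs] at this
    have : (r : ℚ) ≤ 2 * s := by linarith
    exact_mod_cast this
  have h2 : 2 * s ≤ r + 1 := by
    have := Int.ceil_lt_add_one ((r : ℚ) / 2)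
    rw [← hs] at this
    have : (2 * s : ℚ) < r + 2 := by linarith
    have : 2 * s < r + 2 := by exact_mod_cast this
    omega
  -- h bound
  have hh2 : r * (r - 1) ≤ 2 * h := by
    have hd : (2:ℤ) ∣ r * (r - 1) := by
      rcases Int.even_or_odd r with ⟨k, hk⟩ | ⟨k, hk⟩
      · exact ⟨k * (r - 1), by rw [hk]; ring⟩
      · exact ⟨r * k, by rw [hk]; ring⟩
    obtain ⟨k, hk⟩ := hd
    rw [hk] at hh ⊢
    omega
  have key := key_poly r s h ℓ i hr h1 h2 hh2 hcase
  have hil : 2 ≤ i - ℓ := by rcases hcase with ⟨a, b, c, d⟩ | ⟨a, c, d⟩ <;> omega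
  have hilQ : (2:ℚ) ≤ (i:ℚ) - ℓ := by
    have : ((2:ℤ):ℚ) ≤ ((i - ℓ : ℤ):ℚ) := Int.cast_le.mpr hil
    push_cast at this; linarith
  have hrQ : (0:ℚ) < (r:ℚ) := by
    have : ((0:ℤ):ℚ) < ((r:ℤ):ℚ) := Int.cast_lt.mpr (by omega)
    simpa using this
  have hne : (i:ℚ) - ℓ ≠ 0 := by linarith
  have hr0 : (r:ℚ) ≠ 0 := ne_of_gt hrQ
  have keyQ : (0:ℚ) ≤ (2*((i:ℚ)-ℓ)*((r:ℚ)-2)-2*((ℓ:ℚ)-1))*(4*(h:ℚ)-(r:ℚ)*((r:ℚ)-2)+4)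
      - 4*(r:ℚ)*((i:ℚ)-ℓ)*((h:ℚ)-((ℓ:ℚ)-1)*(s:ℚ)-(r:ℚ)+(i:ℚ)) := by
    exact_mod_cast key
  rw [ge_iff_le, ← sub_nonneg]
  have hrw : (2 / (r : ℚ)) * ((r : ℚ) - 2 - ((ℓ : ℚ) - 1) / ((i : ℚ) - ℓ)) *
        ((h : ℚ) - (r : ℚ) * ((r : ℚ) - 2) / 4 + 1)
      - ((h : ℚ) - (((ℓ : ℚ) - 1) * (s : ℚ) + (r : ℚ) - (i : ℚ)))
      = ((2*((i:ℚ)-ℓ)*((r:ℚ)-2)-2*((ℓ:ℚ)-1))*(4*(h:ℚ)-(r:ℚ)*((r:ℚ)-2)+4)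
        - 4*(r:ℚ)*((i:ℚ)-ℓ)*((h:ℚ)-((ℓ:ℚ)-1)*(s:ℚ)-(r:ℚ)+(i:ℚ))) / (4*(r:ℚ)*((i:ℚ)-ℓ)) := by
    field_simp
    ring
  rw [hrw]
  apply div_nonneg keyQ
  nlinarith
end

section
/- Let r ≥ 5 be an integer, s = ⌈r/2⌉, ℓ an integer with 2 ≤ ℓ ≤ s-1, and h ≥ r(r-1)/2. Then 2·((r-ℓ-1)/(r-ℓ))·((r-1)/r)·(h - r(r-2)/4 + 1) ≥ h - (ℓ-1)·s. -/
/-- Lemma 2.3 (le:calculation-2). -/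
theorem stmt_1 (r s h ℓ : ℤ) (hr : 5 ≤ r) (hs : s = ⌈(r : ℚ) / 2⌉)
    (hℓ : 2 ≤ ℓ) (hℓs : ℓ ≤ s - 1) (hh : r * (r - 1) / 2 ≤ h) :
    2 * (((r : ℚ) - ℓ - 1) / ((r : ℚ) - ℓ)) * (((r : ℚ) - 1) / (r : ℚ)) *
        ((h : ℚ) - (r : ℚ) * ((r : ℚ) - 2) / 4 + 1)
      ≥ (h : ℚ) - ((ℓ : ℚ) - 1) * (s : ℚ) := by
  -- bounds on s from the ceiling
  have hsl : (r : ℚ) / 2 ≤ (s : ℚ) := hs ▸ Int.le_ceil _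
  have hsu : (s : ℚ) < (r : ℚ) / 2 + 1 := hs ▸ Int.ceil_lt_add_one _
  have hsu' : 2 * s ≤ r + 1 := by
    have : ((2 * s : ℤ) : ℚ) < ((r + 2 : ℤ) : ℚ) := by push_cast; linarith
    have h2 : (2 * s : ℤ) < r + 2 := by exact_mod_cast this
    omega
  -- h bound: r*(r-1) is even so integer division is exact
  have heven : (r * (r - 1)) % 2 = 0 := by
    rcases Int.even_or_odd r with he | ho
    · obtain ⟨k, hk⟩ := he; subst hk; ring_nf; omega
    · obtain ⟨k, hk⟩ := ho; subst hk; ring_nf; omega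
  have hh2 : r * (r - 1) ≤ 2 * h := by omega
  have hh2q : (r : ℚ) * ((r : ℚ) - 1) ≤ 2 * (h : ℚ) := by
    have : ((r * (r - 1) : ℤ) : ℚ) ≤ ((2 * h : ℤ) : ℚ) := by exact_mod_cast hh2
    push_cast at this; linarith
  -- cast facts
  have hrq : (5 : ℚ) ≤ (r : ℚ) := by exact_mod_cast hr
  have hlq : (2 : ℚ) ≤ (ℓ : ℚ) := by exact_mod_cast hℓ
  have h2l : 2 * (ℓ : ℚ) ≤ (r : ℚ) - 1 := by
    have : 2 * ℓ ≤ r - 1 := by omega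
    have : ((2 * ℓ : ℤ) : ℚ) ≤ ((r - 1 : ℤ) : ℚ) := by exact_mod_cast this
    push_cast at this; linarith
  have hrpos : (0 : ℚ) < (r : ℚ) := by linarith
  have hrl : (0 : ℚ) < (r : ℚ) - (ℓ : ℚ) := by linarith
  have hden : (0 : ℚ) < ((r : ℚ) - (ℓ : ℚ)) * (r : ℚ) := mul_pos hrl hrpos
  have key : ((h : ℚ) - ((ℓ : ℚ) - 1) * (s : ℚ)) * (((r : ℚ) - ℓ) * (r : ℚ))
      ≤ 2 * ((r : ℚ) - ℓ - 1) * ((r : ℚ) - 1) *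
        ((h : ℚ) - (r : ℚ) * ((r : ℚ) - 2) / 4 + 1) * (((r : ℚ) - ℓ) * (r : ℚ))
        / (((r : ℚ) - ℓ) * (r : ℚ)) := by
    rw [mul_div_assoc, div_self hden.ne', mul_one]
    nlinarith [sq_nonneg ((r:ℚ) - 2*ℓ), sq_nonneg ((r:ℚ) - ℓ),
      mul_nonneg (mul_nonneg (sub_nonneg.2 h2l) hrpos.le) hrpos.le,
      mul_nonneg (sub_nonneg.2 hh2q) (sub_nonneg.2 h2l),
      mul_nonneg (sub_nonneg.2 hh2q) (by linarith : (0:ℚ) ≤ (r:ℚ) - ℓ - 1),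
      mul_nonneg (mul_nonneg (sub_nonneg.2 hh2q) (by linarith : (0:ℚ) ≤ (r:ℚ) - ℓ - 1)) hrpos.le,
      mul_nonneg (sub_nonneg.2 hlq) (sub_nonneg.2 (by linarith : 2*(ℓ:ℚ) ≤ r)),
      mul_nonneg (mul_nonneg (sub_nonneg.2 hlq) hrpos.le) hrpos.le,
      mul_le_mul_of_nonneg_left hsl (by linarith : (0:ℚ) ≤ (ℓ:ℚ) - 1),
      mul_nonneg (mul_nonneg (sub_nonneg.2 h2l) (sub_nonneg.2 h2l)) hrpos.le]
  rw [ge_iff_le, ← mul_le_mul_iff_of_pos_right hden]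
  calc ((h : ℚ) - ((ℓ : ℚ) - 1) * (s : ℚ)) * (((r : ℚ) - ℓ) * (r : ℚ))
      ≤ 2 * ((r : ℚ) - ℓ - 1) * ((r : ℚ) - 1) *
        ((h : ℚ) - (r : ℚ) * ((r : ℚ) - 2) / 4 + 1) * (((r : ℚ) - ℓ) * (r : ℚ))
        / (((r : ℚ) - ℓ) * (r : ℚ)) := key
    _ = 2 * (((r : ℚ) - ℓ - 1) / ((r : ℚ) - ℓ)) * (((r : ℚ) - 1) / (r : ℚ)) *
        ((h : ℚ) - (r : ℚ) * ((r : ℚ) - 2) / 4 + 1) * (((r : ℚ) - ℓ) * (r : ℚ)) := by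
        field_simp
end

section
/- Let G be a simply k-colored multigraph, H a multigraph, and let t be the number of pairs of vertices of H with positive multiplicity. Suppose φ: V(H) → V(G) is an embedding, i.e., an injection with w_G(φ(u)φ(v)) ≥ w_H(uv) for all pairs uv. If there is an enumeration (f_1, …, f_t) of the pairs of H with positive multiplicity such that w_G(φ(f_i)) ≥ Σ_{ℓ=1}^{i} w_H(f_ℓ) for all i ∈ [t], then G contains a multicolored copy of H on the image φ(V(H)). -/
/-- The multiplicity of the pair `e` in the simply `k`-colored multigraph with colors `c`. -/
noncomputable def colorMult {V : Type*} (k : ℕ) (c : Fin k → SimpleGraph V) (e : Sym2 V) : ℕ :=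
  Nat.card {i : Fin k // e ∈ (c i).edgeSet}

noncomputable def greedy {k : ℕ} (S : ℕ → Finset (Fin k)) (w : ℕ → ℕ) : ℕ → Finset (Fin k)
  | n =>
    if h : w n ≤ (S n \ (Finset.range n).attach.biUnion (fun m => greedy S w m.1)).card then
      (Finset.exists_subset_card_eq h).choose
    else ∅
  termination_by n => n
  decreasing_by all_goals exact Finset.mem_range.mp m.2

theorem greedy_subset {k : ℕ} (S : ℕ → Finset (Fin k)) (w : ℕ → ℕ) (n : ℕ) :
    greedy S w n ⊆ S n \ (Finset.range n).attach.biUnion (fun m => greedy S w m.1) := by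
  rw [greedy]
  split
  · exact (Finset.exists_subset_card_eq (by assumption)).choose_spec.1
  · simp

theorem greedy_card_le {k : ℕ} (S : ℕ → Finset (Fin k)) (w : ℕ → ℕ) (n : ℕ) :
    (greedy S w n).card ≤ w n := by
  rw [greedy]
  split
  · exact le_of_eq (Finset.exists_subset_card_eq (by assumption)).choose_spec.2
  · simp

theorem greedy_card {k : ℕ} (S : ℕ → Finset (Fin k)) (w : ℕ → ℕ)
    (hall : ∀ n, 0 < w n → ∑ m ∈ Finset.range (n + 1), w m ≤ (S n).card) (n : ℕ) :
    (greedy S w n).card = w n := by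
  rw [greedy]
  split
  · exact (Finset.exists_subset_card_eq (by assumption)).choose_spec.2
  · rename_i h
    exfalso
    apply h
    rcases Nat.eq_zero_or_pos (w n) with h0 | h0
    · simp [h0]
    have h1 : ((Finset.range n).attach.biUnion (fun m => greedy S w m.1)).card
        ≤ ∑ m ∈ Finset.range n, w m := by
      calc ((Finset.range n).attach.biUnion (fun m => greedy S w m.1)).card
          ≤ ∑ m ∈ (Finset.range n).attach, (greedy S w m.1).card :=
            Finset.card_biUnion_le
        _ ≤ ∑ m ∈ (Finset.range n).attach, w m.1 := by
            exact Finset.sum_le_sum fun m _ => greedy_card_le S w m.1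
        _ = ∑ m ∈ Finset.range n, w m := Finset.sum_attach _ _
    have h2 := hall n h0
    rw [Finset.sum_range_succ] at h2
    have h3 := Finset.le_card_sdiff ((Finset.range n).attach.biUnion (fun m => greedy S w m.1)) (S n)
    omega

theorem greedy_disjoint {k : ℕ} (S : ℕ → Finset (Fin k)) (w : ℕ → ℕ) {m n : ℕ} (h : m < n) :
    Disjoint (greedy S w m) (greedy S w n) := by
  have h1 := greedy_subset S w n
  have h2 : greedy S w m ⊆ (Finset.range n).attach.biUnion (fun m => greedy S w m.1) :=
    Finset.subset_biUnion_of_mem (fun m => greedy S w m.1)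
      (Finset.mem_attach _ ⟨m, Finset.mem_range.mpr h⟩)
  exact Finset.disjoint_left.mpr fun j hj1 hj2 =>
    (Finset.mem_sdiff.mp (h1 hj2)).2 (h2 hj1)


/-- Lemma 2.8 (le:Hall): a Hall-type condition guaranteeing a multicolored copy of `H`. -/
theorem stmt_6 {U V : Type*} [Fintype U] [Fintype V] (k : ℕ)
    (c : Fin k → SimpleGraph V) (wH : Sym2 U → ℕ) (hloop : ∀ u : U, wH s(u, u) = 0)
    (t : ℕ) (φ : U → V) (hφ : Function.Injective φ)
    (hemb : ∀ e : Sym2 U, wH e ≤ colorMult k c (Sym2.map φ e))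
    (f : Fin t → Sym2 U) (hfinj : Function.Injective f)
    (hfsupp : ∀ e : Sym2 U, 0 < wH e ↔ ∃ i, f i = e)
    (hall : ∀ i : Fin t,
      (∑ ℓ ∈ Finset.univ.filter (fun ℓ : Fin t => ℓ ≤ i), wH (f ℓ)) ≤
        colorMult k c (Sym2.map φ (f i))) :
    ∃ C : Sym2 U → Finset (Fin k),
      (∀ e, (C e).card = wH e) ∧
      (∀ e e', e ≠ e' → Disjoint (C e) (C e')) ∧
      (∀ e, ∀ j ∈ C e, Sym2.map φ e ∈ (c j).edgeSet) := by
  classical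
  have hcm : ∀ e : Sym2 V, colorMult k c e
      = (Finset.univ.filter (fun j : Fin k => e ∈ (c j).edgeSet)).card := by
    intro e
    rw [colorMult, Nat.card_eq_fintype_card, Fintype.card_subtype]
  set S' : ℕ → Finset (Fin k) := fun n =>
    if h : n < t then Finset.univ.filter (fun j => Sym2.map φ (f ⟨n, h⟩) ∈ (c j).edgeSet)
    else ∅ with hS'
  set w' : ℕ → ℕ := fun n => if h : n < t then wH (f ⟨n, h⟩) else 0 with hw'
  have hall' : ∀ n, 0 < w' n → ∑ m ∈ Finset.range (n + 1), w' m ≤ (S' n).card := by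
    intro n hn
    have ht : n < t := by
      by_contra h
      simp [hw', h] at hn
    have hsum : ∑ m ∈ Finset.range (n + 1), w' m
        = ∑ ℓ ∈ Finset.univ.filter (fun ℓ : Fin t => ℓ ≤ ⟨n, ht⟩), wH (f ℓ) := by
      refine (Finset.sum_nbij' (i := fun ℓ : Fin t => (ℓ : ℕ))
        (j := fun m : ℕ => (⟨m % t, Nat.mod_lt _ (by omega)⟩ : Fin t)) ?_ ?_ ?_ ?_ ?_).symm
      · intro a ha
        simp only [Finset.mem_filter, Finset.mem_univ, true_and, Fin.le_def, Fin.val_mk] at ha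
        exact Finset.mem_range.mpr (by beta_reduce; omega)
      · intro a ha
        have := Finset.mem_range.mp ha
        have hlt : a % t = a := Nat.mod_eq_of_lt (by omega)
        simp only [Finset.mem_filter, Finset.mem_univ, true_and]
        exact Fin.mk_le_mk.mpr (by omega)
      · intro a _; exact Fin.ext (Nat.mod_eq_of_lt a.isLt)
      · intro a ha
        exact Nat.mod_eq_of_lt (by have := Finset.mem_range.mp ha; omega)
      · intro a ha
        simp only [Finset.mem_filter, Finset.mem_univ, true_and] at ha
        simp only [hw', dif_pos a.isLt, Fin.eta]
    rw [hsum]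
    have hScard : (S' n).card = colorMult k c (Sym2.map φ (f ⟨n, ht⟩)) := by
      simp only [hS', dif_pos ht, hcm]
    rw [hScard]
    exact hall ⟨n, ht⟩
  refine ⟨fun e => if h : ∃ i, f i = e then greedy S' w' (h.choose : Fin t).val else ∅, ?_, ?_, ?_⟩
  · intro e
    beta_reduce
    split
    · rename_i h
      rw [greedy_card S' w' hall']
      simp only [hw', dif_pos (h.choose).isLt, Fin.eta, h.choose_spec]
    · rename_i h
      have : wH e = 0 := by
        by_contra h0
        exact h ((hfsupp e).mp (Nat.pos_of_ne_zero h0))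
      simp [this]
  · intro e e' hne
    beta_reduce
    split
    · rename_i h
      split
      · rename_i h'
        have hii : (h.choose : Fin t) ≠ h'.choose := by
          intro heq
          exact hne (h.choose_spec ▸ heq ▸ h'.choose_spec)
        rcases lt_or_gt_of_ne (fun hv => hii (Fin.ext hv) : (h.choose : Fin t).val ≠ h'.choose.val)
          with hlt | hlt
        · exact greedy_disjoint S' w' hlt
        · exact (greedy_disjoint S' w' hlt).symm
      · simp
    · simp
  · intro e j hj
    beta_reduce at hj
    split at hj
    · rename_i h
      have hsub := greedy_subset S' w' (h.choose : Fin t).val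
      have := (Finset.mem_sdiff.mp (hsub hj)).1
      simp only [hS', dif_pos (h.choose).isLt, Fin.eta, Finset.mem_filter] at this
      rw [← h.choose_spec]
      exact this.2
    · simp at hj
end

section
/- Let r ≥ 5 and s = ⌈r/2⌉, and let h ≥ C(r,2). For each j with 1 ≤ j ≤ s+1, let (w_1 ≥ w_2 ≥ … ≥ w_{C(r,2)}) be a non-increasing sequence of nonnegative integers summing to h, and set h_j = Σ_{ℓ=s}^{s+j-1} w_ℓ. If additionally every w_i ≥ 1, then h_j ≤ (j/(s+j-1))·(h - r(r-2)/4 + 1). -/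
/-!
Since `w` is non-increasing, the window `w_s, …, w_{s+j-1}` has average at most that of the
prefix `w_1, …, w_{s+j-1}`, so `h_j ≤ j/(s+j-1)` times the prefix sum. Each of the remaining
`C(r,2) - (s+j-1)` terms is at least `1`, so the prefix sum is at most `h - C(r,2) + (s+j-1)`.
Finally `C(r,2) - r(r-2)/4 = r²/4 ≥ r ≥ s+j-2` once `r ≥ 4`.
-/

open Finset

theorem sum_Icc_add_one_consecutive {M : Type*} [AddCommMonoid M] (w : ℕ → M) {a b c : ℕ}
    (hab : a ≤ b) (hbc : b ≤ c) :
    ∑ ℓ ∈ Icc (a + 1) b, w ℓ + ∑ ℓ ∈ Icc (b + 1) c, w ℓ = ∑ ℓ ∈ Icc (a + 1) c, w ℓ := by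
  simp only [Finset.Icc_add_one_left_eq_Ioc]
  exact sum_Ioc_consecutive w hab hbc

section OrderedSemiring

variable {R : Type*} [CommSemiring R] [PartialOrder R] [IsOrderedRing R]

theorem mul_sum_window_le_mul_sum_prefix (w : ℕ → R) (a b : ℕ)
    (hw : AntitoneOn w (Set.Icc 1 (a + b))) :
    (a + b : R) * ∑ ℓ ∈ Icc (a + 1) (a + b), w ℓ ≤ b * ∑ ℓ ∈ Icc 1 (a + b), w ℓ := by
  rcases Nat.eq_zero_or_pos b with rfl | hb
  · simp
  have hpivot : a + 1 ∈ Set.Icc 1 (a + b) := ⟨by omega, by omega⟩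
  have hwindow : ∑ ℓ ∈ Icc (a + 1) (a + b), w ℓ ≤ b * w (a + 1) := by
    simpa using sum_le_card_nsmul (Icc (a + 1) (a + b)) w (w (a + 1)) fun x hx =>
      hw hpivot ⟨by grind, (mem_Icc.1 hx).2⟩ (mem_Icc.1 hx).1
  have hhead : a * w (a + 1) ≤ ∑ ℓ ∈ Icc 1 a, w ℓ := by
    simpa using card_nsmul_le_sum (Icc 1 a) w (w (a + 1)) fun x hx =>
      hw ⟨(mem_Icc.1 hx).1, by grind⟩ hpivot (by grind)
  have hsplit := sum_Icc_add_one_consecutive w (Nat.zero_le a) (Nat.le_add_right a b)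
  rw [zero_add] at hsplit
  calc (a + b : R) * ∑ ℓ ∈ Icc (a + 1) (a + b), w ℓ
      = a * ∑ ℓ ∈ Icc (a + 1) (a + b), w ℓ + b * ∑ ℓ ∈ Icc (a + 1) (a + b), w ℓ := add_mul _ _ _
    _ ≤ a * (b * w (a + 1)) + b * ∑ ℓ ∈ Icc (a + 1) (a + b), w ℓ := by gcongr
    _ = b * (a * w (a + 1)) + b * ∑ ℓ ∈ Icc (a + 1) (a + b), w ℓ := by ring
    _ ≤ b * ∑ ℓ ∈ Icc 1 a, w ℓ + b * ∑ ℓ ∈ Icc (a + 1) (a + b), w ℓ := by gcongr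
    _ = b * ∑ ℓ ∈ Icc 1 (a + b), w ℓ := by rw [← mul_add, hsplit]

theorem sum_Icc_add_le_sum_Icc_add (w : ℕ → R) {m n : ℕ} (hmn : m ≤ n)
    (hw : ∀ ℓ ∈ Icc (m + 1) n, 1 ≤ w ℓ) :
    ∑ ℓ ∈ Icc 1 m, w ℓ + n ≤ ∑ ℓ ∈ Icc 1 n, w ℓ + m := by
  have htail : ((n - m : ℕ) : R) ≤ ∑ ℓ ∈ Icc (m + 1) n, w ℓ := by
    simpa using card_nsmul_le_sum (Icc (m + 1) n) w 1 hw
  calc ∑ ℓ ∈ Icc 1 m, w ℓ + n = ∑ ℓ ∈ Icc 1 m, w ℓ + (n - m : ℕ) + m := by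
        rw [add_assoc, ← Nat.cast_add, Nat.sub_add_cancel hmn]
    _ ≤ ∑ ℓ ∈ Icc 1 m, w ℓ + ∑ ℓ ∈ Icc (m + 1) n, w ℓ + m := by gcongr
    _ = ∑ ℓ ∈ Icc 1 n, w ℓ + m := by rw [sum_Icc_add_one_consecutive w (Nat.zero_le m) hmn]

end OrderedSemiring

theorem add_one_le_choose_two {r : ℕ} (hr : 4 ≤ r) : r + 1 ≤ r.choose 2 := by
  rw [Nat.choose_two_right, Nat.le_div_iff_mul_le two_pos]
  obtain ⟨k, rfl⟩ := Nat.exists_eq_add_of_le hr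
  simp only [show 4 + k - 1 = 3 + k by omega]
  nlinarith

theorem sub_one_add_le_choose_two {r m : ℕ} (hr : 4 ≤ r) (hm : m ≤ r + 1) :
    (m : ℚ) - 1 + r * (r - 2) / 4 ≤ r.choose 2 := by
  rw [Nat.cast_choose_two]
  have : (4 : ℚ) ≤ r := by exact_mod_cast hr
  have : (m : ℚ) ≤ r + 1 := by exact_mod_cast hm
  nlinarith

theorem stmt_7_general (r s h j : ℕ) (hr : 5 ≤ r) (hs : s = (r + 1) / 2)
    (hj2 : j ≤ s + 1)
    (w : ℕ → ℕ)
    (hsorted : ∀ a b, 1 ≤ a → a ≤ b → b ≤ r.choose 2 → w b ≤ w a)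
    (hge1 : ∀ ℓ, 1 ≤ ℓ → ℓ ≤ r.choose 2 → 1 ≤ w ℓ)
    (hsum : ∑ ℓ ∈ Finset.Icc 1 (r.choose 2), w ℓ = h) :
    ((∑ ℓ ∈ Finset.Icc s (s + j - 1), w ℓ : ℕ) : ℚ) ≤
      ((j : ℚ) / ((s : ℚ) + (j : ℚ) - 1)) *
        ((h : ℚ) - (r : ℚ) * ((r : ℚ) - 2) / 4 + 1) := by
  obtain ⟨a, rfl⟩ : ∃ a, s = a + 1 := ⟨s - 1, by omega⟩
  have hmC : a + j ≤ r.choose 2 := by have := add_one_le_choose_two (r := r) (by omega); omega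
  have hwindow := mul_sum_window_le_mul_sum_prefix (fun ℓ => (w ℓ : ℚ)) a j
    fun x hx y hy hxy => by dsimp only; exact_mod_cast hsorted x y hx.1 hxy (hy.2.trans hmC)
  have htail := sum_Icc_add_le_sum_Icc_add (fun ℓ => (w ℓ : ℚ)) hmC
    fun ℓ hℓ => by exact_mod_cast hge1 ℓ (by grind) (mem_Icc.1 hℓ).2
  have hroom := sub_one_add_le_choose_two (r := r) (m := a + j) (by omega) (by omega)
  have hsumQ : ∑ ℓ ∈ Icc 1 (r.choose 2), (w ℓ : ℚ) = h := by exact_mod_cast hsum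
  push_cast at hwindow htail hroom
  have hprefix : ∑ ℓ ∈ Icc 1 (a + j), (w ℓ : ℚ) ≤ h - r * (r - 2) / 4 + 1 := by linarith
  rw [show a + 1 + j - 1 = a + j by omega,
    show ((a + 1 : ℕ) : ℚ) + j - 1 = a + j by push_cast; ring,
    div_mul_eq_mul_div, le_div_iff₀ (by exact_mod_cast (by omega : 0 < a + j)), mul_comm]
  push_cast
  exact hwindow.trans (by gcongr)

/-- Claim 4.2 (cl:hj): bound on partial sums of the sorted multiplicity sequence. -/
theorem stmt_7 (r s h j : ℕ) (hr : 5 ≤ r) (hs : s = (r + 1) / 2)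
    (hh : r.choose 2 ≤ h) (hj1 : 1 ≤ j) (hj2 : j ≤ s + 1)
    (w : ℕ → ℕ)
    (hsorted : ∀ a b, 1 ≤ a → a ≤ b → b ≤ r.choose 2 → w b ≤ w a)
    (hge1 : ∀ ℓ, 1 ≤ ℓ → ℓ ≤ r.choose 2 → 1 ≤ w ℓ)
    (hsum : ∑ ℓ ∈ Finset.Icc 1 (r.choose 2), w ℓ = h) :
    ((∑ ℓ ∈ Finset.Icc s (s + j - 1), w ℓ : ℕ) : ℚ) ≤
      ((j : ℚ) / ((s : ℚ) + (j : ℚ) - 1)) *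
        ((h : ℚ) - (r : ℚ) * ((r : ℚ) - 2) / 4 + 1) :=
  stmt_7_general r s h j hr hs hj2 w hsorted hge1 hsum
end

section
/- Let r ≥ 5, s = ⌈r/2⌉, and h ≥ C(r,2). Then for every j with 2 ≤ j ≤ s, one has (j-1)·(2/r)·(h - r(r-2)/4 + 1) > 1 + ((j-1)/(r-2))·(1/2)·(h - C(r-2,2) - 1). -/
/-- Key numeric inequality in Claim 4.4 (the star case of the embedding argument). -/
theorem stmt_8 (r s h j : ℤ) (hr : 5 ≤ r) (hs : s = ⌈(r : ℚ) / 2⌉)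
    (hh : r * (r - 1) / 2 ≤ h) (hj1 : 2 ≤ j) (hj2 : j ≤ s) :
    ((j : ℚ) - 1) * (2 / (r : ℚ)) * ((h : ℚ) - (r : ℚ) * ((r : ℚ) - 2) / 4 + 1)
      > 1 + (((j : ℚ) - 1) / ((r : ℚ) - 2)) * (1 / 2) *
          ((h : ℚ) - ((r : ℚ) - 2) * ((r : ℚ) - 3) / 2 - 1) := by
  have hr' : (5:ℚ) ≤ (r:ℚ) := by exact_mod_cast hr
  have hhZ : r * (r - 1) ≤ 2 * h := by
    obtain ⟨k, hk⟩ := Int.even_mul_succ_self (r - 1)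
    have hk' : r * (r - 1) = 2 * k := by ring_nf; ring_nf at hk; omega
    omega
  have hh' : (r:ℚ) * ((r:ℚ) - 1) ≤ 2 * (h:ℚ) := by exact_mod_cast hhZ
  have hjs : 2 * j ≤ r + 1 := by
    have h1 : ((⌈(r : ℚ) / 2⌉ : ℤ) : ℚ) < (r:ℚ)/2 + 1 := Int.ceil_lt_add_one _
    rw [← hs] at h1
    have h2 : ((2*s : ℤ) : ℚ) < ((r + 2 : ℤ) : ℚ) := by push_cast; linarith
    have h3 : 2*s < r + 2 := by exact_mod_cast h2
    omega
  have hj1' : (2:ℚ) ≤ (j:ℚ) := by exact_mod_cast hj1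
  have hj2' : 2 * (j:ℚ) ≤ (r:ℚ) + 1 := by exact_mod_cast hjs
  have hr0 : (0:ℚ) < (r:ℚ) := by linarith
  have hr2 : (0:ℚ) < (r:ℚ) - 2 := by linarith
  rw [gt_iff_lt, ← sub_pos]
  have hexp : ((j : ℚ) - 1) * (2 / (r : ℚ)) * ((h : ℚ) - (r : ℚ) * ((r : ℚ) - 2) / 4 + 1)
      - (1 + (((j : ℚ) - 1) / ((r : ℚ) - 2)) * (1 / 2) *
          ((h : ℚ) - ((r : ℚ) - 2) * ((r : ℚ) - 3) / 2 - 1))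
      = (((j:ℚ)-1) * (2 * ((r:ℚ)-2)) * (4*(h:ℚ) - (r:ℚ)*((r:ℚ)-2) + 4)
          - (4 * (r:ℚ) * ((r:ℚ)-2) + ((j:ℚ)-1) * (r:ℚ) * (2*(h:ℚ) - ((r:ℚ)-2)*((r:ℚ)-3) - 2)))
        / (4 * (r:ℚ) * ((r:ℚ)-2)) := by
    field_simp
    ring
  rw [hexp]
  apply div_pos
  · nlinarith [mul_nonneg (mul_nonneg (by linarith : (0:ℚ) ≤ (j:ℚ)-1) (by linarith : (0:ℚ) ≤ 2*(h:ℚ) - (r:ℚ)*((r:ℚ)-1))) (by linarith : (0:ℚ) ≤ 3*(r:ℚ)-8),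
      mul_nonneg (by linarith : (0:ℚ) ≤ (j:ℚ)-2) (by nlinarith [sq_nonneg ((r:ℚ)-4)] : (0:ℚ) ≤ 2*(r:ℚ)^3-8*(r:ℚ)^2+16*(r:ℚ)-16),
      pow_pos hr2 3]
  · positivity
end

section
/- Suppose 0 < 1/n ≪ δ < 1 (i.e., n is sufficiently large relative to δ). Let G be an n-vertex multigraph with d·C(n,2) edges, and let B ⊆ V(G) be a vertex set with |B| = δn/2 such that every v ∈ B satisfies d_G(v) < (1-δ)·d·n. Then the multigraph G - B has at least (1 + δ²/2)·d·C(|V(G)|-|B|, 2) edges. -/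
/-!
The edges of `G` meeting `B` number at most `∑_{v ∈ B} d_G(v) < |B| (1 - δ) d n = δ (1 - δ) d n² / 2`,
so `e(G - B) ≥ d n (n - 1) / 2 - δ (1 - δ) d n² / 2`. Since `n - |B| = (1 - δ/2) n`, the target
`(1 + δ²/2) d C(n - |B|, 2)` has leading term `(1 - δ + 3δ²/4 - δ³/2 + δ⁴/8) d n² / 2`, which falls
short of the leading term `(1 - δ + δ²) d n² / 2` of the lower bound by at least `δ² d n² / 8`;
this absorbs the linear terms as soon as `n ≥ 2 / δ`.
-/

open Finset

lemma sum_not_isDiag_le_sum_avoiding_add_sum_incident {α M : Type*} [Fintype α] [DecidableEq α]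
    [AddCommMonoid M] [PartialOrder M] [IsOrderedAddMonoid M]
    (w : Sym2 α → M) (hw : ∀ e, 0 ≤ w e) (B : Finset α)
    [DecidablePred fun e : Sym2 α => ∀ v ∈ B, v ∉ e] :
    ∑ e ∈ univ.filter (fun e => ¬ e.IsDiag), w e ≤
      ∑ e ∈ univ.filter (fun e => ¬ e.IsDiag ∧ ∀ v ∈ B, v ∉ e), w e +
        ∑ v ∈ B, ∑ u, w s(v, u) := by
  rw [← sum_filter_add_sum_filter_not _ (fun e => ∀ v ∈ B, v ∉ e), filter_filter]
  gcongr
  calc ∑ e ∈ univ.filter (fun e => ¬ e.IsDiag) with ¬ ∀ v ∈ B, v ∉ e, w e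
      ≤ ∑ e ∈ (B ×ˢ (univ : Finset α)).image (fun p => s(p.1, p.2)), w e := by
        refine sum_le_sum_of_subset_of_nonneg (fun e he => ?_) fun e _ _ => hw e
        simp only [mem_filter, mem_univ, true_and, not_forall, not_not] at he
        obtain ⟨-, v, hvB, hve⟩ := he
        obtain ⟨u, rfl⟩ := Sym2.mem_iff_exists.mp hve
        exact mem_image.mpr ⟨(v, u), mem_product.mpr ⟨hvB, mem_univ u⟩, rfl⟩
    _ ≤ ∑ p ∈ B ×ˢ (univ : Finset α), w s(p.1, p.2) := sum_image_le_of_nonneg fun e _ => hw e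
    _ = ∑ v ∈ B, ∑ u, w s(v, u) := sum_product _ _ _

lemma choose_two_sub_bound {δ n : ℝ} (hδ0 : 0 < δ) (hδ1 : δ < 1) (hn : 2 / δ ≤ n) :
    (1 + δ ^ 2 / 2) * ((n - δ * n / 2) * (n - δ * n / 2 - 1) / 2) ≤
      n * (n - 1) / 2 - δ * n / 2 * ((1 - δ) * n) := by
  have h2 : 2 ≤ δ * n := by rwa [div_le_iff₀' hδ0] at hn
  have hn0 : 0 ≤ n := by nlinarith
  nlinarith [mul_nonneg (mul_nonneg hn0 hδ0.le) (sub_nonneg.2 h2), mul_nonneg hn0 hδ0.le,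
    mul_nonneg (mul_nonneg (mul_nonneg hn0 hn0) (mul_nonneg hδ0.le hδ0.le)) hδ0.le,
    mul_nonneg (mul_nonneg (mul_nonneg hn0 hn0) (mul_nonneg hδ0.le hδ0.le)) (sub_nonneg.2 hδ1.le)]

open scoped Classical in
/-- Observation 5.1 (ob:G-B). -/
theorem stmt_10 (δ : ℝ) (hδ0 : 0 < δ) (hδ1 : δ < 1) :
    ∃ n₀ : ℕ, ∀ n : ℕ, n₀ ≤ n →
      ∀ w : Sym2 (Fin n) → ℕ, (∀ v : Fin n, w s(v, v) = 0) →
      ∀ d : ℝ,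
        (∑ e ∈ (Finset.univ : Finset (Sym2 (Fin n))).filter (fun e => ¬ e.IsDiag),
            (w e : ℝ)) = d * (n.choose 2) →
      ∀ B : Finset (Fin n), (B.card : ℝ) = δ * n / 2 →
        (∀ v ∈ B, (∑ u : Fin n, (w s(v, u) : ℝ)) < (1 - δ) * d * n) →
        (1 + δ ^ 2 / 2) * d * ((n - B.card).choose 2) ≤
          ∑ e ∈ (Finset.univ : Finset (Sym2 (Fin n))).filter
              (fun e => ¬ e.IsDiag ∧ ∀ v ∈ B, ¬ v ∈ e), (w e : ℝ) := by
  refine ⟨⌈2 / δ⌉₊ + 2, fun n hn w _ d hd B hB hdeg => ?_⟩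
  have hnδ : 2 / δ ≤ n := (Nat.le_ceil _).trans (by exact_mod_cast (Nat.le_add_right _ 2).trans hn)
  have hd0 : 0 ≤ d := nonneg_of_mul_nonneg_left (hd ▸ sum_nonneg fun e _ => Nat.cast_nonneg _)
    (by exact_mod_cast Nat.choose_pos (by omega : 2 ≤ n))
  have hsplit := sum_not_isDiag_le_sum_avoiding_add_sum_incident (fun e => (w e : ℝ))
    (fun e => Nat.cast_nonneg _) B
  have hincident : ∑ v ∈ B, ∑ u, (w s(v, u) : ℝ) ≤ B.card * ((1 - δ) * d * n) := by
    simpa using sum_le_card_nsmul B _ _ fun v hv => (hdeg v hv).le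
  have hcount := mul_le_mul_of_nonneg_left (choose_two_sub_bound hδ0 hδ1 hnδ) hd0
  have hBn : B.card ≤ n := by simpa using card_le_univ B
  rw [Nat.cast_choose_two, Nat.cast_sub hBn, hB]
  rw [hd, Nat.cast_choose_two] at hsplit
  rw [hB] at hincident
  linarith
end

section
/- Let r ≥ 3, h ≤ k ≤ h + ⌊r/2⌋ - 1, and 0 < 1/n ≪ δ ≪ 1/k. Let H be an r-vertex multigraph with h edges (counted with multiplicity) and w_H(e) ≥ 1 for each pair e, and let G be an n-vertex simply k-colored multigraph containing no multicolored copy of H, with minimum degree δ(G) ≥ (1-δ)(h-1)(n-1). Then every pair of vertices of G has multiplicity w_G(e) ≤ h-1. -/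
/-- The simply `k`-colored multigraph with colors `c` contains a multicolored copy of the
multigraph on `U` with multiplicity function `wH`. -/
def HasMulticoloredCopy {U V : Type*} (k : ℕ) (c : Fin k → SimpleGraph V)
    (wH : Sym2 U → ℕ) : Prop :=
  ∃ φ : U → V, Function.Injective φ ∧
    ∃ C : Sym2 U → Finset (Fin k),
      (∀ e, (C e).card = wH e) ∧
      (∀ e e', e ≠ e' → Disjoint (C e) (C e')) ∧
      (∀ e, ∀ j ∈ C e, Sym2.map φ e ∈ (c j).edgeSet)

open Finset Function

/-!
Suppose some pair `xy` of `G` has multiplicity at least `h`. Since the minimum degree is close to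
`(h - 1)(n - 1)`, averaging lets us extend `x, y` greedily to distinct vertices
`u₀ = x, u₁ = y, u₂, …, u_{r-1}` such that each `u_b` sends total multiplicity at least `b(h - 1)`
back to `u₀, …, u_{b-1}`. Put `H` on these vertices; a greedy choice of pairwise disjoint colour
sets succeeds as soon as every nonempty set `T` of pairs of `H` contains a pair whose multiplicity
`W` in `G` is at least the weight of `T`. If this fails, there is a threshold `w < h` such that some
pair has `W ≤ w` but fewer than `h - w` pairs have `W > w`. Each pair has `W ≤ h - 1 + t`, with
`t = k - h + 1 ≤ r / 2`; balancing deficits `h - 1 - W` against surpluses, once over all pairs and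
once at a vertex `u_b` with a light back pair, gives `r(r - 1)/2 < t(r - 1)`, a contradiction.
-/

theorem exists_disjoint_subsets_of_forall_exists_sum_le {α β : Type*} (pal : α → Finset β)
    (a : α → ℕ) (T : Finset α)
    (hT : ∀ T' ⊆ T, T'.Nonempty → ∃ e ∈ T', ∑ x ∈ T', a x ≤ #(pal e)) :
    ∃ C : α → Finset β, (∀ e, C e ⊆ pal e) ∧ (∀ e ∈ T, #(C e) = a e) ∧
      (∀ e ∉ T, C e = ∅) ∧ Pairwise (Disjoint on C) := by
  classical
  induction T using Finset.strongInduction with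
  | H T ih =>
  obtain rfl | hne := T.eq_empty_or_nonempty
  · exact ⟨fun _ => ∅, fun _ => empty_subset _, by simp, fun _ _ => rfl,
      fun _ _ _ => disjoint_empty_left _⟩
  obtain ⟨e₀, he₀, hsum⟩ := hT T subset_rfl hne
  obtain ⟨C, hCpal, hCcard, hCout, hCdisj⟩ := ih (T.erase e₀) (erase_ssubset he₀)
    fun T' hT' => hT T' (hT'.trans (erase_subset _ _))
  set U := (T.erase e₀).biUnion C
  have hU : #U ≤ ∑ x ∈ T.erase e₀, a x :=
    card_biUnion_le.trans (sum_le_sum fun x hx => (hCcard x hx).le)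
  have hfree : a e₀ ≤ #(pal e₀ \ U) := by
    have := add_sum_erase T a he₀
    have := le_card_sdiff U (pal e₀)
    omega
  obtain ⟨D, hDsub, hDcard⟩ := exists_subset_card_eq hfree
  have hD : ∀ f, f ≠ e₀ → Disjoint D (C f) := by
    intro f hf
    by_cases hfT : f ∈ T.erase e₀
    · exact disjoint_of_subset_left hDsub (disjoint_sdiff_self_left.mono_right
        (subset_biUnion_of_mem C hfT))
    · simp [hCout f hfT]
  refine ⟨update C e₀ D, fun e => ?_, fun e he => ?_, fun e he => ?_, fun e f hef => ?_⟩
  · rcases eq_or_ne e e₀ with rfl | h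
    · simpa using hDsub.trans sdiff_subset
    · simpa [h] using hCpal e
  · rcases eq_or_ne e e₀ with rfl | h
    · simpa using hDcard
    · simpa [h] using hCcard e (mem_erase.2 ⟨h, he⟩)
  · have h : e ≠ e₀ := by rintro rfl; exact he he₀
    simpa [h] using hCout e (fun h' => he (mem_of_mem_erase h'))
  · rw [onFun]
    rcases eq_or_ne e e₀ with rfl | he
    · simpa [hef.symm] using hD f hef.symm
    rcases eq_or_ne f e₀ with rfl | hf
    · simpa [he] using (hD e he).symm
    · simpa [he, hf] using hCdisj hef

theorem exists_sum_le_of_le_card_filter_lt {α : Type*} (S : Finset α) (a W : α → ℕ) {h : ℕ}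
    (hsum : ∑ e ∈ S, a e = h) (ha : ∀ e ∈ S, 1 ≤ a e)
    (hthr : ∀ w < h, (∃ e ∈ S, W e ≤ w) → h - w ≤ #{e ∈ S | w < W e}) :
    ∀ T ⊆ S, T.Nonempty → ∃ e ∈ T, ∑ x ∈ T, a x ≤ W e := by
  classical
  intro T hTS hT
  obtain ⟨e, he, hmax⟩ := exists_max_image T W hT
  refine ⟨e, he, ?_⟩
  have hsplit : ∑ x ∈ S \ T, a x + ∑ x ∈ T, a x = h := hsum ▸ sum_sdiff hTS
  by_cases heavy : h ≤ W e
  · omega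
  have hheavy : {x ∈ S | W e < W x} ⊆ S \ T := fun x hx =>
    mem_sdiff.2 ⟨(mem_filter.1 hx).1, fun hxT => (hmax x hxT).not_gt (mem_filter.1 hx).2⟩
  have hrest : #(S \ T) ≤ ∑ x ∈ S \ T, a x :=
    card_eq_sum_ones (S \ T) ▸ sum_le_sum fun x hx => ha x (mem_sdiff.1 hx).1
  have := hthr (W e) (by omega) ⟨e, hTS he, le_rfl⟩
  have := card_le_card hheavy
  omega

theorem sum_add_mul_card_le_card_mul_add_mul_card {ι : Type*} (s : Finset ι) (g : ι → ℕ)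
    {c t w d : ℕ} (hwd : w + d = c) (hg : ∀ i ∈ s, g i ≤ c + t) :
    ∑ i ∈ s, g i + d * #{i ∈ s | g i ≤ w} ≤ #s * c + t * #{i ∈ s | c < g i} := by
  have hpt : ∀ i ∈ s,
      g i + d * (if g i ≤ w then 1 else 0) ≤ c + t * (if c < g i then 1 else 0) := by
    intro i hi
    have := hg i hi
    split_ifs <;> omega
  have := sum_le_sum hpt
  simpa only [sum_add_distrib, ← mul_sum, sum_boole, sum_const, smul_eq_mul, Nat.cast_id,
    mul_comm c] using this

theorem mul_card_filter_le_mul_card_filter {ι : Type*} (s : Finset ι) (g : ι → ℕ)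
    {c t w d : ℕ} (hwd : w + d = c) (hg : ∀ i ∈ s, g i ≤ c + t) (hsum : #s * c ≤ ∑ i ∈ s, g i) :
    d * #{i ∈ s | g i ≤ w} ≤ t * #{i ∈ s | c < g i} := by
  have := sum_add_mul_card_le_card_mul_add_mul_card s g hwd hg
  omega

theorem sum_filter_not_isDiag_eq_sum_sum_Iio {ι M : Type*} [LinearOrder ι] [Fintype ι]
    [LocallyFiniteOrderBot ι] [AddCommMonoid M] (p : Sym2 ι → M) :
    ∑ e with ¬ e.IsDiag, p e = ∑ b, ∑ a ∈ Iio b, p s(a, b) := by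
  rw [← sym2_univ, sum_sym2_filter_not_isDiag]
  exact sum_finset_product_right' (f := fun a b => p s(a, b)) _ _ _ fun x => by
    simpa using ne_of_lt

theorem two_mul_card_filter_not_isDiag (ι : Type*) [Fintype ι] [DecidableEq ι] :
    2 * #{e : Sym2 ι | ¬ e.IsDiag} = Fintype.card ι * (Fintype.card ι - 1) := by
  rw [← Fintype.card_subtype, Sym2.card_subtype_not_diag, Nat.choose_two_right,
    Nat.mul_div_cancel' (Nat.even_mul_pred_self _).two_dvd]

section Threshold

-- In the application `c = h - 1` and `t = k - h + 1`; a pair is light if `W ≤ w`, heavy if `W > c`.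
variable {ι : Type*} [LinearOrder ι] [Fintype ι] [LocallyFiniteOrderBot ι] {W : Sym2 ι → ℕ}
  {c t w : ℕ}

theorem sub_add_le_mul_card_sub_one (hW : ∀ e, W e ≤ c + t)
    (hback : ∀ b, #(Iio b) * c ≤ ∑ a ∈ Iio b, W s(a, b)) (hw : w ≤ c) {x y : ι} (hxy : x < y)
    (hlight : W s(x, y) ≤ w) :
    c - w + t ≤ t * (Fintype.card ι - 1) := by
  set Q := #{a ∈ Iio y | c < W s(a, y)}
  have hdeficit : (c - w) * #{a ∈ Iio y | W s(a, y) ≤ w} ≤ t * Q :=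
    mul_card_filter_le_mul_card_filter _ _ (by omega) (fun _ _ => hW _) (hback y)
  have hlight' : 0 < #{a ∈ Iio y | W s(a, y) ≤ w} := card_pos.mpr ⟨x, by simp [hxy, hlight]⟩
  have hsplit := card_filter_add_card_filter_not (s := Iio y) (W s(·, y) ≤ w)
  have hQ : Q ≤ #{a ∈ Iio y | ¬ W s(a, y) ≤ w} :=
    card_le_card (monotone_filter_right _ fun a _ (ha : c < W s(a, y)) => by omega)
  have hy : #(Iio y) < Fintype.card ι := card_lt_univ_of_notMem notMem_Iio_self
  calc c - w + t ≤ t * Q + t := by grw [← hdeficit, ← Nat.le_mul_of_pos_right _ hlight']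
    _ = t * (Q + 1) := by ring
    _ ≤ t * (Fintype.card ι - 1) := Nat.mul_le_mul_left t (by omega)

theorem le_card_filter_lt_of_forall_le_sum_Iio (hW : ∀ e, W e ≤ c + t)
    (hback : ∀ b, #(Iio b) * c ≤ ∑ a ∈ Iio b, W s(a, b))
    (hstrict : ∃ b, #(Iio b) * c < ∑ a ∈ Iio b, W s(a, b))
    (ht : 2 * t ≤ Fintype.card ι) (hw : w ≤ c) (hlight : ∃ e, ¬ e.IsDiag ∧ W e ≤ w) :
    c + 1 - w ≤ #{e ∈ ({e | ¬ e.IsDiag} : Finset (Sym2 ι)) | w < W e} := by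
  set S : Finset (Sym2 ι) := {e | ¬ e.IsDiag}
  set d := c - w
  by_contra! hP
  have hglobal : ∑ e ∈ S, W e + d * #{e ∈ S | W e ≤ w} ≤ #S * c + t * #{e ∈ S | c < W e} :=
    sum_add_mul_card_le_card_mul_add_mul_card S W (by omega) fun e _ => hW e
  have hsum : #S * c < ∑ e ∈ S, W e := by
    have : #S * c = ∑ e ∈ S, c := by simp
    rw [this, sum_filter_not_isDiag_eq_sum_sum_Iio, sum_filter_not_isDiag_eq_sum_sum_Iio]
    obtain ⟨b, hb⟩ := hstrict
    exact sum_lt_sum (fun b _ => by simpa using hback b) ⟨b, mem_univ b, by simpa using hb⟩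
  have hQP : #{e ∈ S | c < W e} ≤ #{e ∈ S | w < W e} :=
    card_le_card (monotone_filter_right _ fun e _ (he : c < W e) => hw.trans_lt he)
  have hDP : #{e ∈ S | W e ≤ w} + #{e ∈ S | w < W e} = #S := by
    simpa only [not_le] using card_filter_add_card_filter_not (s := S) (W · ≤ w)
  have hlocal : d + t ≤ t * (Fintype.card ι - 1) := by
    obtain ⟨e, he, hew⟩ := hlight
    induction e using Sym2.inductionOn with | hf x y => ?_
    rcases lt_or_gt_of_ne (Sym2.mk_isDiag_iff.not.mp he) with hxy | hxy
    · exact sub_add_le_mul_card_sub_one hW hback hw hxy hew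
    · exact sub_add_le_mul_card_sub_one hW hback hw hxy (Sym2.eq_swap ▸ hew)
  have hdt : #S < d + t := by
    by_contra! h
    have : t * #{e ∈ S | c < W e} ≤ d * #{e ∈ S | W e ≤ w} :=
      calc t * #{e ∈ S | c < W e} ≤ t * d := Nat.mul_le_mul_left t (by omega)
        _ = d * t := Nat.mul_comm t d
        _ ≤ d * #{e ∈ S | W e ≤ w} := Nat.mul_le_mul_left d (by omega)
    omega
  have := two_mul_card_filter_not_isDiag ι
  have : 2 * t * (Fintype.card ι - 1) ≤ Fintype.card ι * (Fintype.card ι - 1) :=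
    Nat.mul_le_mul_right _ ht
  nlinarith

end Threshold

open scoped Classical in
theorem colorMult_eq_card {V : Type*} (k : ℕ) (c : Fin k → SimpleGraph V) (e : Sym2 V) :
    colorMult k c e = #{i | e ∈ (c i).edgeSet} := by
  rw [colorMult, Nat.card_eq_fintype_card, Fintype.card_subtype]

theorem colorMult_le {V : Type*} (k : ℕ) (c : Fin k → SimpleGraph V) (e : Sym2 V) :
    colorMult k c e ≤ k := by
  classical
  exact (colorMult_eq_card k c e).trans_le ((card_filter_le _ _).trans_eq (card_fin k))

theorem colorMult_self {V : Type*} (k : ℕ) (c : Fin k → SimpleGraph V) (v : V) :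
    colorMult k c s(v, v) = 0 := by
  classical
  simp [colorMult_eq_card]

open scoped Classical in
theorem hasMulticoloredCopy_of_le_sum_Iio {U V : Type*} [LinearOrder U] [Fintype U]
    [LocallyFiniteOrderBot U] {k h t : ℕ} (c : Fin k → SimpleGraph V) (wH : Sym2 U → ℕ)
    (hloop : ∀ v, wH s(v, v) = 0) (hge1 : ∀ e, ¬ e.IsDiag → 1 ≤ wH e)
    (hsum : ∑ e with ¬ e.IsDiag, wH e = h) (hk : k ≤ h - 1 + t) (ht : 2 * t ≤ Fintype.card U)
    (φ : U → V) (hφ : Injective φ)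
    (hback : ∀ b, #(Iio b) * (h - 1) ≤ ∑ a ∈ Iio b, colorMult k c s(φ a, φ b))
    (hstrict : ∃ b, #(Iio b) * (h - 1) < ∑ a ∈ Iio b, colorMult k c s(φ a, φ b)) :
    HasMulticoloredCopy k c wH := by
  set W : Sym2 U → ℕ := fun e => colorMult k c (e.map φ)
  have hall := exists_sum_le_of_le_card_filter_lt {e | ¬ e.IsDiag} wH W hsum
    (fun e he => hge1 e (mem_filter.1 he).2) fun w hw ⟨e, he, hew⟩ => by
      have := le_card_filter_lt_of_forall_le_sum_Iio (W := W) (c := h - 1)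
        (fun e => (colorMult_le k c _).trans hk) hback hstrict ht (by omega)
        ⟨e, (mem_filter.1 he).2, hew⟩
      omega
  obtain ⟨C, hCpal, hCcard, hCout, hCdisj⟩ := exists_disjoint_subsets_of_forall_exists_sum_le
    (fun e => {i | e.map φ ∈ (c i).edgeSet}) wH _ fun T hT hne => by
      simpa [W, colorMult_eq_card] using hall T hT hne
  refine ⟨φ, hφ, C, fun e => ?_, fun e e' hne => hCdisj hne,
    fun e j hj => by simpa using hCpal e hj⟩
  by_cases he : e.IsDiag
  · induction e using Sym2.ind with | h x y => ?_
    rw [Sym2.mk_isDiag_iff] at he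
    subst he
    simp [hCout s(x, x) (by simp), hloop]
  · exact hCcard e (by simpa using he)

theorem exists_notMem_le_sum_of_le_sum {V : Type*} [Fintype V] [DecidableEq V]
    (w : V → V → ℕ) {k L : ℕ} {D : ℝ} (s : Finset V) (hw : ∀ x y, w x y ≤ k)
    (hdeg : ∀ x ∈ s, D ≤ ∑ y, (w x y : ℝ))
    (hlt : #s * (#s * k) + (Fintype.card V - #s) * (L - 1 : ℝ) < #s * D) :
    ∃ z ∉ s, L ≤ ∑ x ∈ s, w x z := by
  by_contra! hsmall
  have hout : ∀ z ∈ sᶜ, ∑ x ∈ s, (w x z : ℝ) ≤ L - 1 := by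
    intro z hz
    have : ∑ x ∈ s, w x z + 1 ≤ L := hsmall z (mem_compl.1 hz)
    have : (∑ x ∈ s, w x z : ℝ) + 1 ≤ L := by exact_mod_cast this
    linarith
  have hin : ∀ x ∈ s, ∑ y ∈ s, (w x y : ℝ) ≤ #s * k := fun x _ => by
    simpa using sum_le_card_nsmul s (fun y => (w x y : ℝ)) k fun y _ => by exact_mod_cast hw x y
  have hcompl : (#sᶜ : ℝ) = Fintype.card V - #s := by
    rw [card_compl, Nat.cast_sub (card_le_univ s)]
  have := calc (#s : ℝ) * D ≤ ∑ x ∈ s, ∑ y, (w x y : ℝ) := by simpa using sum_le_sum hdeg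
    _ = ∑ x ∈ s, ∑ y ∈ s, (w x y : ℝ) + ∑ z ∈ sᶜ, ∑ x ∈ s, (w x z : ℝ) := by
      simp_rw [← sum_add_sum_compl s, sum_add_distrib, sum_comm (s := s) (t := sᶜ)]
    _ ≤ ∑ x ∈ s, (#s * k : ℝ) + ∑ z ∈ sᶜ, (L - 1 : ℝ) :=
      add_le_add (sum_le_sum hin) (sum_le_sum hout)
    _ = #s * (#s * k) + (Fintype.card V - #s) * (L - 1 : ℝ) := by
      simp only [sum_const, nsmul_eq_mul, hcompl]
  linarith

-- The hypothesis of `exists_notMem_le_sum_of_le_sum` for `#s = j`, `L = j(h - 1)` and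
-- `D = (1 - δ)(h - 1)(n - 1)`.
theorem greedy_extension_bound (j h k n δ : ℝ) (hj : 1 ≤ j) (hh : 1 ≤ h) (hk : 0 ≤ k)
    (hδj : δ * j * (h - 1) ≤ 1 / 2) (hn : 2 * j ^ 2 * k + 2 * j ≤ n) :
    j * (j * k) + (n - j) * (j * (h - 1) - 1) < j * ((1 - δ) * (h - 1) * (n - 1)) := by
  have : δ * j * (h - 1) * (n - 1) ≤ 1 / 2 * (n - 1) :=
    mul_le_mul_of_nonneg_right hδj (by nlinarith)
  nlinarith [mul_nonneg (mul_nonneg (by linarith : 0 ≤ j) (by linarith : 0 ≤ h - 1))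
    (by linarith : 0 ≤ j - 1)]

theorem exists_injOn_le_sum_Iio {V : Type*} [DecidableEq V] (w : V → V → ℕ) {r L : ℕ}
    (hr : 2 ≤ r) {x y : V} (hxy : x ≠ y) (hL : L ≤ w x y)
    (hext : ∀ s : Finset V, 2 ≤ #s → #s < r → ∃ z ∉ s, #s * L ≤ ∑ v ∈ s, w v z) :
    ∃ u : ℕ → V, u 0 = x ∧ u 1 = y ∧ Set.InjOn u (Set.Iio r) ∧
      ∀ b < r, b * L ≤ ∑ a ∈ Iio b, w (u a) (u b) := by
  induction r, hr using Nat.le_induction with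
  | base =>
    refine ⟨fun i => if i = 0 then x else y, rfl, rfl, ?_, fun b hb => ?_⟩
    · intro a ha b hb hab
      simp only [Set.mem_Iio] at ha hb
      interval_cases a <;> interval_cases b <;> simp_all [eq_comm]
    · interval_cases b <;> simp [Nat.Iio_eq_range, hL]
  | succ j hj ih =>
    obtain ⟨u, hu0, hu1, hinj, hsum⟩ := ih fun s hs hsj => hext s hs (by omega)
    have hinj' : Set.InjOn u (Iio j : Finset ℕ) := by rwa [coe_Iio]
    have hcard : #((Iio j).image u) = j := by rw [card_image_of_injOn hinj', Nat.card_Iio]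
    obtain ⟨z, hz, hzL⟩ := hext ((Iio j).image u) (by omega) (by omega)
    rw [hcard, sum_image hinj'] at hzL
    have hz' : ∀ a < j, u a ≠ z := fun a ha h => hz (mem_image.2 ⟨a, mem_Iio.2 ha, h⟩)
    refine ⟨update u j z, by rw [update_of_ne (by omega), hu0],
      by rw [update_of_ne (by omega), hu1], ?_, fun b hb => ?_⟩
    · intro a ha b hb hab
      simp only [Set.mem_Iio] at ha hb
      simp only [update_apply] at hab
      split_ifs at hab with haj hbj hbj
      · omega
      · exact absurd hab.symm (hz' b (by omega))
      · exact absurd hab (hz' a (by omega))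
      · exact hinj (by simpa using (by omega : a < j)) (by simpa using (by omega : b < j)) hab
    · rcases (Nat.lt_succ_iff_lt_or_eq.1 hb) with hb | rfl
      · rw [update_of_ne (by omega)]
        refine (hsum b hb).trans_eq (sum_congr rfl fun a ha => ?_)
        rw [update_of_ne (by simp at ha; omega)]
      · rw [update_self]
        refine hzL.trans_eq (sum_congr rfl fun a ha => ?_)
        rw [update_of_ne (by simp at ha; omega)]

theorem exists_injOn_le_sum_colorMult {V : Type*} [Fintype V] [DecidableEq V] {k h r : ℕ}
    {δ : ℝ} (c : Fin k → SimpleGraph V) (hr : 2 ≤ r) (hh : 1 ≤ h) (hδ : 0 ≤ δ)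
    (hδr : δ * r * h ≤ 1 / 2) (hn : 2 * r ^ 2 * k + 2 * r ≤ Fintype.card V)
    (hdeg : ∀ v, (1 - δ) * ((h : ℝ) - 1) * ((Fintype.card V : ℝ) - 1) ≤
      ∑ u, (colorMult k c s(v, u) : ℝ))
    {x y : V} (hxy : h ≤ colorMult k c s(x, y)) :
    ∃ u : ℕ → V, u 0 = x ∧ u 1 = y ∧ Set.InjOn u (Set.Iio r) ∧
      ∀ b < r, b * (h - 1) ≤ ∑ a ∈ Iio b, colorMult k c s(u a, u b) := by
  have hne : x ≠ y := by
    rintro rfl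
    rw [colorMult_self] at hxy
    omega
  refine exists_injOn_le_sum_Iio (fun v w => colorMult k c s(v, w)) hr hne (by omega)
    fun s hs hsr => exists_notMem_le_sum_of_le_sum _ s (fun _ _ => colorMult_le k c _)
      (fun x _ => hdeg x) ?_
  have hsr' : (#s : ℝ) ≤ r := by exact_mod_cast hsr.le
  have hh' : (1 : ℝ) ≤ h := by exact_mod_cast hh
  push_cast [Nat.cast_sub hh]
  refine greedy_extension_bound _ _ _ _ _ (by norm_cast; omega) hh'
    (Nat.cast_nonneg k) ?_ ?_
  · calc δ * #s * (h - 1) ≤ δ * r * h := by gcongr; linarith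
      _ ≤ 1 / 2 := hδr
  · have : (2 * r ^ 2 * k + 2 * r : ℝ) ≤ Fintype.card V := by exact_mod_cast hn
    have : (#s : ℝ) ^ 2 * k ≤ r ^ 2 * k := by gcongr
    linarith

theorem Fin.sum_Iio_eq_sum_Iio_val {M : Type*} [AddCommMonoid M] {r : ℕ} (f : ℕ → M)
    (b : Fin r) : ∑ a ∈ Iio b, f a = ∑ a ∈ Iio (b : ℕ), f a := by
  rw [← Fin.map_valEmbedding_Iio, sum_map]
  rfl

theorem stmt_13_general (r h k : ℕ) (hr : 3 ≤ r) (hk2 : k ≤ h + r / 2 - 1)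
    (wH : Sym2 (Fin r) → ℕ)
    (hloop : ∀ v : Fin r, wH s(v, v) = 0)
    (hge1 : ∀ e : Sym2 (Fin r), ¬ e.IsDiag → 1 ≤ wH e)
    (hsum : ∑ e ∈ (Finset.univ : Finset (Sym2 (Fin r))).filter (fun e => ¬ e.IsDiag), wH e = h) :
    ∃ δ₀ : ℝ, 0 < δ₀ ∧ ∀ δ : ℝ, 0 < δ → δ ≤ δ₀ →
      ∃ n₀ : ℕ, ∀ n : ℕ, n₀ ≤ n →
        ∀ c : Fin k → SimpleGraph (Fin n),
          ¬ HasMulticoloredCopy k c wH →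
          (∀ v : Fin n,
            (1 - δ) * ((h : ℝ) - 1) * ((n : ℝ) - 1) ≤
              ((∑ u : Fin n, colorMult k c s(v, u) : ℕ) : ℝ)) →
          ∀ e : Sym2 (Fin n), colorMult k c e ≤ h - 1 := by
  have hh : 1 ≤ h := by
    have he : ¬ s((⟨0, by omega⟩ : Fin r), ⟨1, by omega⟩).IsDiag := by simp
    rw [← hsum]
    exact (hge1 _ he).trans (single_le_sum (fun _ _ => Nat.zero_le _) (by simp [he]))
  refine ⟨1 / (2 * r * h), by positivity, fun δ hδ hδ₀ =>
    ⟨2 * r ^ 2 * k + 2 * r, fun n hn c hfree hdeg => ?_⟩⟩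
  by_contra! ⟨e, he⟩
  induction e using Sym2.ind with | h x y => ?_
  have hδr : δ * r * h ≤ 1 / 2 := by
    rw [le_div_iff₀ (by positivity)] at hδ₀
    linarith
  obtain ⟨u, hu0, hu1, hinj, hback⟩ := exists_injOn_le_sum_colorMult c (by omega) hh hδ.le hδr
    (by simpa using hn) (fun v => by simpa using hdeg v) (by omega : h ≤ colorMult k c s(x, y))
  refine hfree (hasMulticoloredCopy_of_le_sum_Iio c wH hloop hge1 hsum (t := k + 1 - h)
    (by omega) (by simp; omega) (fun i : Fin r => u i)
    (fun i j hij => Fin.ext (hinj i.2 j.2 hij)) (fun b => ?_) ⟨⟨1, by omega⟩, ?_⟩)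
  all_goals rw [Fin.card_Iio, Fin.sum_Iio_eq_sum_Iio_val (fun a => colorMult k c s(u a, u _))]
  · exact hback b b.2
  · simp [Nat.Iio_eq_range, hu0, hu1]
    omega

/-- Lemma B.1 (le:ksmall_r_vertex-degree). -/
theorem stmt_13 (r h k : ℕ) (hr : 3 ≤ r) (hk1 : h ≤ k) (hk2 : k ≤ h + r / 2 - 1)
    (wH : Sym2 (Fin r) → ℕ)
    (hloop : ∀ v : Fin r, wH s(v, v) = 0)
    (hge1 : ∀ e : Sym2 (Fin r), ¬ e.IsDiag → 1 ≤ wH e)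
    (hsum : ∑ e ∈ (Finset.univ : Finset (Sym2 (Fin r))).filter (fun e => ¬ e.IsDiag), wH e = h) :
    ∃ δ₀ : ℝ, 0 < δ₀ ∧ ∀ δ : ℝ, 0 < δ → δ ≤ δ₀ →
      ∃ n₀ : ℕ, ∀ n : ℕ, n₀ ≤ n →
        ∀ c : Fin k → SimpleGraph (Fin n),
          ¬ HasMulticoloredCopy k c wH →
          (∀ v : Fin n,
            (1 - δ) * ((h : ℝ) - 1) * ((n : ℝ) - 1) ≤
              ((∑ u : Fin n, colorMult k c s(v, u) : ℕ) : ℝ)) →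
          ∀ e : Sym2 (Fin n), colorMult k c e ≤ h - 1 :=
  stmt_13_general r h k hr hk2 wH hloop hge1 hsum
end

section
/- Let r ≥ 5 and s = ⌈r/2⌉. For every j ∈ [s+1], define L_j as follows: L_j = j·(2/r) if j ∈ [s-2], L_{s-1} = (r-2)/r, L_s = (s-1)·(2/r), and L_{s+1} = (r-1)/r. Then for each j ∈ [s+1], L_j ≥ j/(s+j-1). -/
/-- Arithmetic core of Claim 4.3 (cl:ej'). -/
theorem stmt_17 (r s : ℕ) (hr : 5 ≤ r) (hs : s = (r + 1) / 2) (j : ℕ)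
    (hj1 : 1 ≤ j) (hj2 : j ≤ s + 1) :
    (j : ℚ) / ((s : ℚ) + (j : ℚ) - 1) ≤
      (if j ≤ s - 2 then (j : ℚ) * (2 / (r : ℚ))
       else if j = s - 1 then ((r : ℚ) - 2) / (r : ℚ)
       else if j = s then ((s : ℚ) - 1) * (2 / (r : ℚ))
       else ((r : ℚ) - 1) / (r : ℚ)) := by
  have h1 : r ≤ 2 * s := by omega
  have h2 : 2 * s ≤ r + 1 := by omega
  have hs3 : 3 ≤ s := by omega
  have hrq : (5 : ℚ) ≤ (r : ℚ) := by exact_mod_cast hr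
  have h1q : (r : ℚ) ≤ 2 * s := by exact_mod_cast h1
  have h2q : (2 : ℚ) * s ≤ r + 1 := by exact_mod_cast h2
  have hsq : (3 : ℚ) ≤ (s : ℚ) := by exact_mod_cast hs3
  have hjq : (1 : ℚ) ≤ (j : ℚ) := by exact_mod_cast hj1
  have hden : (0 : ℚ) < (s : ℚ) + (j : ℚ) - 1 := by linarith
  have hrpos : (0 : ℚ) < (r : ℚ) := by linarith
  split_ifs with hA hB hC
  · have hjs : j + 2 ≤ s := by omega
    have hjsq : (j : ℚ) + 2 ≤ s := by exact_mod_cast hjs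
    have he : (j:ℚ) * (2 / (r:ℚ)) = (2*j) / r := by ring
    rw [he, div_le_div_iff₀ hden hrpos]
    nlinarith
  · have hj' : (j : ℚ) = (s : ℚ) - 1 := by
      have : j + 1 = s := by omega
      have := congrArg (Nat.cast : ℕ → ℚ) this
      push_cast at this; linarith
    rw [div_le_div_iff₀ hden hrpos]
    nlinarith
  · have hj' : (j : ℚ) = (s : ℚ) := by exact_mod_cast hC
    have he : ((s:ℚ) - 1) * (2 / (r:ℚ)) = (2*((s:ℚ)-1)) / r := by ring
    rw [he, div_le_div_iff₀ hden hrpos]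
    nlinarith
  · have hj' : (j : ℚ) = (s : ℚ) + 1 := by
      have : j = s + 1 := by omega
      exact_mod_cast this
    rw [div_le_div_iff₀ hden hrpos]
    nlinarith
end

section
/- Let H be a multigraph on r vertices with h edges counted with multiplicity, such that every pair of distinct vertices has multiplicity at least 1. Suppose G is a multigraph on vertices v_1, …, v_r, and e'_1, …, e'_{C(r,2)} is an enumeration of all pairs of vertices of G such that w_G(e'_j) ≥ h - (C(r,2) - j) for every j. Then for every bijection φ: V(H) → V(G) and every j, and for every set E of j pairs of H, we have w_G(e'_j) ≥ Σ_{e∈E} w_H(e); consequently, if G is simply k-colored with k ≥ h, then G contains a multicolored copy of H. -/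
/-- The final step of Lemma B.1: from an enumeration of the pairs of `G` with
`w_G(e'_j) ≥ h - (C(r,2) - j)` one obtains a multicolored copy of `H`. -/
theorem stmt_19 (r h k : ℕ) (hk : h ≤ k) {U V : Type*}
    [Fintype U] [Fintype V] [DecidableEq U] [DecidableEq V]
    (hU : Fintype.card U = r) (hV : Fintype.card V = r)
    (wH : Sym2 U → ℕ)
    (hloop : ∀ u : U, wH s(u, u) = 0)
    (hge1 : ∀ e : Sym2 U, ¬ e.IsDiag → 1 ≤ wH e)
    (hsum : ∑ e ∈ (Finset.univ : Finset (Sym2 U)).filter (fun e => ¬ e.IsDiag), wH e = h)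
    (c : Fin k → SimpleGraph V)
    (e' : Fin (r.choose 2) → Sym2 V)
    (he'inj : Function.Injective e')
    (he'nd : ∀ j, ¬ (e' j).IsDiag)
    (hw : ∀ j : Fin (r.choose 2),
      (h : ℤ) - ((r.choose 2 : ℤ) - ((j : ℕ) + 1 : ℕ)) ≤ (colorMult k c (e' j) : ℤ)) :
    (∀ _φ : U ≃ V, ∀ j : Fin (r.choose 2), ∀ E : Finset (Sym2 U),
        (∀ e ∈ E, ¬ e.IsDiag) → E.card = (j : ℕ) + 1 →
        ((∑ e ∈ E, wH e : ℕ) : ℤ) ≤ (colorMult k c (e' j) : ℤ)) ∧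
      HasMulticoloredCopy k c wH := by
  classical
  have hdiag0 : ∀ e : Sym2 U, e.IsDiag → wH e = 0 := by
    intro e he
    induction e using Sym2.ind with
    | _ a b =>
      rw [Sym2.isDiag_iff_proj_eq] at he
      have hab : a = b := he
      subst hab
      exact hloop a
  set ND : Finset (Sym2 U) := (Finset.univ : Finset (Sym2 U)).filter (fun e => ¬ e.IsDiag)
    with hND
  have hNDcard : ND.card = r.choose 2 := by
    rw [hND, ← Fintype.card_subtype, Sym2.card_subtype_not_diag, hU]
  -- the key counting lemma
  have key : ∀ E : Finset (Sym2 U), (∀ e ∈ E, ¬ e.IsDiag) →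
      ((∑ e ∈ E, wH e : ℕ) : ℤ) ≤ (h : ℤ) - ((r.choose 2 : ℤ) - (E.card : ℤ)) := by
    intro E hE
    have hsub : E ⊆ ND := fun e he => Finset.mem_filter.mpr ⟨Finset.mem_univ _, hE e he⟩
    have hsplit : ∑ e ∈ ND \ E, wH e + ∑ e ∈ E, wH e = ∑ e ∈ ND, wH e :=
      Finset.sum_sdiff hsub
    have hlow : (ND \ E).card ≤ ∑ e ∈ ND \ E, wH e := by
      calc (ND \ E).card = ∑ _e ∈ ND \ E, 1 := by simp
        _ ≤ ∑ e ∈ ND \ E, wH e := by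
            refine Finset.sum_le_sum fun e he => ?_
            exact hge1 e (Finset.mem_filter.mp (Finset.mem_sdiff.mp he).1).2
    have hcardsd : (ND \ E).card = ND.card - E.card := Finset.card_sdiff_of_subset hsub
    have hle : E.card ≤ ND.card := Finset.card_le_card hsub
    have hcast : ((ND \ E).card : ℤ) = (r.choose 2 : ℤ) - (E.card : ℤ) := by
      rw [hcardsd, ← hNDcard]
      exact_mod_cast Int.ofNat_sub hle
    rw [hND] at hsplit
    rw [hsum] at hsplit
    have : ((∑ e ∈ ND \ E, wH e : ℕ) : ℤ) + ((∑ e ∈ E, wH e : ℕ) : ℤ) = (h : ℤ) := by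
      exact_mod_cast congrArg (Nat.cast : ℕ → ℤ) hsplit
    have hlow' : ((ND \ E).card : ℤ) ≤ ((∑ e ∈ ND \ E, wH e : ℕ) : ℤ) := by exact_mod_cast hlow
    rw [hcast] at hlow'
    linarith
  have hcolor : ∀ e : Sym2 V,
      colorMult k c e = (Finset.univ.filter (fun i : Fin k => e ∈ (c i).edgeSet)).card := by
    intro e
    rw [colorMult, Nat.card_eq_fintype_card, Fintype.card_subtype]
  constructor
  · intro _φ j E hE hcard
    have h1 := key E hE
    rw [hcard] at h1
    refine h1.trans ?_
    have := hw j
    push_cast at this ⊢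
    linarith
  · -- construction of the multicolored copy
    obtain ⟨φ⟩ : Nonempty (U ≃ V) := ⟨Fintype.equivOfCardEq (hU.trans hV.symm)⟩
    have hφinj : Function.Injective (φ : U → V) := φ.injective
    have hmapinj : Function.Injective (Sym2.map (φ : U → V)) := Sym2.map.injective hφinj
    -- identify e' as a bijection onto non-diagonal pairs of V
    set e'' : Fin (r.choose 2) → {e : Sym2 V // ¬ e.IsDiag} := fun j => ⟨e' j, he'nd j⟩
      with he''
    have he''inj : Function.Injective e'' := by
      intro a b hab
      exact he'inj (congrArg Subtype.val hab)
    have he''bij : Function.Bijective e'' := by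
      rw [Fintype.bijective_iff_injective_and_card]
      refine ⟨he''inj, ?_⟩
      rw [Sym2.card_subtype_not_diag, hV, Fintype.card_fin]
    set Ψ : Fin (r.choose 2) ≃ {e : Sym2 V // ¬ e.IsDiag} := Equiv.ofBijective e'' he''bij
      with hΨ
    have hΨval : ∀ j, (Ψ j : Sym2 V) = e' j := fun j => rfl
    -- Hall setup
    set t : (Σ e : Sym2 U, Fin (wH e)) → Finset (Fin k) :=
      fun x => Finset.univ.filter (fun i : Fin k => Sym2.map (φ : U → V) x.1 ∈ (c i).edgeSet)
      with ht
    have hall : ∀ s : Finset (Σ e : Sym2 U, Fin (wH e)), s.card ≤ (s.biUnion t).card := by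
      intro s
      rcases s.eq_empty_or_nonempty with rfl | hne
      · simp
      set T : Finset (Sym2 U) := s.image Sigma.fst with hT
      have hTnd : ∀ e ∈ T, ¬ e.IsDiag := by
        intro e he hdiag
        obtain ⟨x, _, rfl⟩ := Finset.mem_image.mp he
        have := hdiag0 x.1 hdiag
        exact absurd (this ▸ x.2).isLt (by simp)
      -- s.card ≤ ∑ over T of wH
      have hs_le : s.card ≤ ∑ e ∈ T, wH e := by
        have hsub : s ⊆ T.sigma (fun e => (Finset.univ : Finset (Fin (wH e)))) := by
          intro x hx
          exact Finset.mem_sigma.mpr ⟨Finset.mem_image_of_mem _ hx, Finset.mem_univ _⟩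
        calc s.card ≤ (T.sigma fun e => (Finset.univ : Finset (Fin (wH e)))).card :=
              Finset.card_le_card hsub
          _ = ∑ e ∈ T, wH e := by rw [Finset.card_sigma]; simp
      -- index function
      have hndmap : ∀ e ∈ T, ¬ (Sym2.map (φ : U → V) e).IsDiag := by
        intro e he
        rw [Sym2.isDiag_map hφinj]
        exact hTnd e he
      have hC2pos : 0 < r.choose 2 := by
        obtain ⟨e0, he0⟩ := Finset.Nonempty.image hne Sigma.fst
        rw [← hNDcard]
        exact Finset.card_pos.mpr ⟨e0, Finset.mem_filter.mpr ⟨Finset.mem_univ _, hTnd e0 he0⟩⟩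
      set g : Sym2 U → Fin (r.choose 2) := fun e =>
        if hd : ¬ (Sym2.map (φ : U → V) e).IsDiag then Ψ.symm ⟨Sym2.map (φ : U → V) e, hd⟩
        else ⟨0, hC2pos⟩ with hg
      have hge' : ∀ e ∈ T, e' (g e) = Sym2.map (φ : U → V) e := by
        intro e he
        rw [hg]
        simp only [hndmap e he, dif_pos]
        have := hΨval (Ψ.symm ⟨Sym2.map (φ : U → V) e, hndmap e he⟩)
        rw [Equiv.apply_symm_apply] at this
        exact this.symm
      have hginj : Set.InjOn g T := by
        intro a ha b hb hab
        have : e' (g a) = e' (g b) := by rw [hab]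
        rw [hge' a ha, hge' b hb] at this
        exact hmapinj this
      set J : Finset (Fin (r.choose 2)) := T.image g with hJ
      have hJne : J.Nonempty := (Finset.Nonempty.image hne Sigma.fst).image g
      set jm : Fin (r.choose 2) := J.max' hJne with hjm
      have hTcard : T.card = J.card := (Finset.card_image_of_injOn hginj).symm
      have hJle : J.card ≤ (jm : ℕ) + 1 := by
        have : J.card = (J.image (Fin.val)).card :=
          (Finset.card_image_of_injective _ Fin.val_injective).symm
        rw [this]
        refine le_trans (Finset.card_le_card ?_) (by rw [Finset.card_range])
        intro n hn
        obtain ⟨a, haJ, rfl⟩ := Finset.mem_image.mp hn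
        exact Finset.mem_range.mpr (Nat.lt_succ_of_le (J.le_max' a haJ))
      -- pick e0 achieving the max
      obtain ⟨e0, he0T, he0g⟩ := Finset.mem_image.mp (J.max'_mem hJne)
      obtain ⟨x0, hx0s, hx0⟩ := Finset.mem_image.mp he0T
      have hFsub : t x0 ⊆ s.biUnion t := fun i hi =>
        Finset.mem_biUnion.mpr ⟨x0, hx0s, hi⟩
      have hmeq : e' jm = Sym2.map (⇑φ) x0.1 := by
        rw [hjm, ← he0g, hge' e0 he0T, hx0]
      have hFcard : colorMult k c (e' jm) = (t x0).card := by
        rw [hcolor, hmeq]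
      -- now the integer chain
      have hkey := key T hTnd
      have hwj := hw jm
      have hineq1 : (s.card : ℤ) ≤ ((∑ e ∈ T, wH e : ℕ) : ℤ) := by exact_mod_cast hs_le
      have hineq2 : ((∑ e ∈ T, wH e : ℕ) : ℤ) ≤ (h : ℤ) - ((r.choose 2 : ℤ) - (T.card : ℤ)) :=
        hkey
      have hineq3 : (T.card : ℤ) ≤ ((jm : ℕ) : ℤ) + 1 := by
        rw [hTcard]; exact_mod_cast hJle
      have hineq4 : (h : ℤ) - ((r.choose 2 : ℤ) - (((jm : ℕ) : ℤ) + 1)) ≤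
          (colorMult k c (e' jm) : ℤ) := by
        have := hwj; push_cast at this ⊢; linarith
      have hineq5 : (colorMult k c (e' jm) : ℤ) ≤ ((s.biUnion t).card : ℤ) := by
        rw [hFcard]
        exact_mod_cast Finset.card_le_card hFsub
      have : (s.card : ℤ) ≤ ((s.biUnion t).card : ℤ) := by linarith
      exact_mod_cast this
    obtain ⟨f, hfinj, hft⟩ := (Finset.all_card_le_biUnion_card_iff_exists_injective t).mp hall
    refine ⟨φ, hφinj, fun e => (Finset.univ : Finset (Fin (wH e))).image (fun a => f ⟨e, a⟩),
      ?_, ?_, ?_⟩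
    · intro e
      rw [Finset.card_image_of_injective]
      · simp
      · intro a b hab
        exact eq_of_heq (Sigma.mk.inj_iff.mp (hfinj hab)).2
    · intro e e2 hne
      rw [Finset.disjoint_left]
      intro i hi hi2
      obtain ⟨a, _, rfl⟩ := Finset.mem_image.mp hi
      obtain ⟨b, _, hb⟩ := Finset.mem_image.mp hi2
      have := hfinj hb.symm
      exact hne (Sigma.mk.inj_iff.mp this).1
    · intro e j hj
      obtain ⟨a, _, rfl⟩ := Finset.mem_image.mp hj
      have := hft ⟨e, a⟩
      rw [ht] at this
      exact (Finset.mem_filter.mp this).2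
end
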